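/- arXiv:1409.1644 — 5 statements merged into one kernel-verified Lean document; each statement's English description precedes it below -/
import Mathlib

section
/- Let H be a Hopf algebra of dimension d over an algebraically closed field F (of arbitrary characteristic), and let D be a division algebra over F of degree m which is an H-module algebra. If gcd(d!, m) = 1, then the center Z of D is H-stable and D = Z·D^H. -/
open TensorProduct

/-- An action of a (bi/Hopf) algebra `H` on an algebra `A`, where the comultiplication and
counit of `H` are supplied explicitly as `comul` and `counit`.  This says exactly that `A`
is an `H`-module algebra:  `h ⬝ (ab) = ∑ (h₁ ⬝ a)(h₂ ⬝ b)` and `h ⬝ 1 = ε(h) 1`. -/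
structure ModAlgAction (k : Type) [CommRing k] (H : Type) [Ring H] [Module k H]
    (comul : H →ₗ[k] H ⊗[k] H) (counit : H →ₗ[k] k)
    (A : Type) [Ring A] [Algebra k A] where
  /-- the action map -/
  act : H →ₗ[k] A →ₗ[k] A
  one_act : ∀ a : A, act 1 a = a
  mul_act : ∀ (g h : H) (a : A), act (g * h) a = act g (act h a)
  act_one : ∀ h : H, act h 1 = algebraMap k A (counit h)
  act_mul : ∀ (h : H) (a b : A), act h (a * b) =
    TensorProduct.lift (((LinearMap.mul k A).comp (act.flip a)).compl₂ (act.flip b)) (comul h)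

/-- An action of a Hopf algebra `H` on an algebra `A`, i.e. an `H`-module algebra
structure on `A`. -/
abbrev HopfAction (k : Type) [CommRing k] (H : Type) [Ring H] [Bialgebra k H]
    (A : Type) [Ring A] [Algebra k A] :=
  ModAlgAction k H (Coalgebra.comul (R := k)) (Coalgebra.counit (R := k)) A

/-- The `k`-subspace `I ⊗ H + H ⊗ I` of `H ⊗ H` determined by a subspace `I ⊆ H`. -/
noncomputable def tensorIdeal (k : Type) [CommRing k] (H : Type) [Ring H] [Module k H]
    (I : Submodule k H) : Submodule k (H ⊗[k] H) :=
  Submodule.span k {z : H ⊗[k] H |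
    (∃ a ∈ I, ∃ b : H, z = a ⊗ₜ[k] b) ∨ (∃ a : H, ∃ b ∈ I, z = a ⊗ₜ[k] b)}

/-- A (two-sided) Hopf ideal of `H`, with respect to explicitly supplied comultiplication,
counit and antipode. -/
def IsHopfIdealWith (k : Type) [CommRing k] (H : Type) [Ring H] [Module k H]
    (comul : H →ₗ[k] H ⊗[k] H) (counit : H →ₗ[k] k) (antipode : H →ₗ[k] H)
    (I : Submodule k H) : Prop :=
  (∀ x ∈ I, ∀ h : H, h * x ∈ I ∧ x * h ∈ I) ∧
  (∀ x ∈ I, comul x ∈ tensorIdeal k H I) ∧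
  (∀ x ∈ I, counit x = 0) ∧
  (∀ x ∈ I, antipode x ∈ I)

/-- A Hopf ideal of a Hopf algebra `H`. -/
abbrev IsHopfIdeal (k : Type) [CommRing k] (H : Type) [Ring H] [HopfAlgebra k H]
    (I : Submodule k H) : Prop :=
  IsHopfIdealWith k H (Coalgebra.comul (R := k)) (Coalgebra.counit (R := k))
    (HopfAlgebra.antipode (R := k)) I

/-- Inner faithfulness of an action map `act`: no nonzero Hopf ideal annihilates `A`. -/
def InnerFaithfulWith (k : Type) [CommRing k] (H : Type) [Ring H] [Module k H]
    (comul : H →ₗ[k] H ⊗[k] H) (counit : H →ₗ[k] k) (antipode : H →ₗ[k] H)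
    (A : Type) [Ring A] [Algebra k A] (act : H →ₗ[k] A →ₗ[k] A) : Prop :=
  ∀ I : Submodule k H, IsHopfIdealWith k H comul counit antipode I →
    (∀ x ∈ I, ∀ a : A, act x a = 0) → I = ⊥

/-- Inner faithfulness of a Hopf algebra action: no nonzero Hopf ideal of `H` acts by zero. -/
abbrev HopfAction.InnerFaithful {k : Type} [CommRing k] {H : Type} [Ring H] [HopfAlgebra k H]
    {A : Type} [Ring A] [Algebra k A] (ha : HopfAction k H A) : Prop :=
  InnerFaithfulWith k H (Coalgebra.comul (R := k)) (Coalgebra.counit (R := k))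
    (HopfAlgebra.antipode (R := k)) A ha.act

/-- The set of invariants of an action. -/
def ModAlgAction.invariants {k : Type} [CommRing k] {H : Type} [Ring H] [Module k H]
    {comul : H →ₗ[k] H ⊗[k] H} {counit : H →ₗ[k] k}
    {A : Type} [Ring A] [Algebra k A] (ha : ModAlgAction k H comul counit A) : Set A :=
  {a : A | ∀ h : H, ha.act h a = counit h • a}

/-- The kernel of an action, as a subspace of `H`. -/
noncomputable def ModAlgAction.actionKernel {k : Type} [CommRing k] {H : Type} [Ring H]
    [Module k H] {comul : H →ₗ[k] H ⊗[k] H} {counit : H →ₗ[k] k}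
    {A : Type} [Ring A] [Algebra k A] (ha : ModAlgAction k H comul counit A) :
    Submodule k H :=
  ⨅ a : A, LinearMap.ker (ha.act.flip a)

section AuxLemmas

variable {F : Type} [Field F] {H : Type} [Ring H] [HopfAlgebra F H]
  {D : Type} [DivisionRing D] [Algebra F D] (ha : HopfAction F H D)

namespace ModAlgAction

lemma mem_invariants_iff (b : D) :
    b ∈ ha.invariants ↔ ∀ h : H, ha.act h b = Coalgebra.counit (R := F) h • b :=
  Iff.rfl

lemma act_inv_left {b : D} (hb : b ∈ ha.invariants) (h : H) (a : D) :
    ha.act h (b * a) = b * ha.act h a := by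
  rw [ha.act_mul]
  have key : TensorProduct.lift (((LinearMap.mul F D).comp (ha.act.flip b)).compl₂ (ha.act.flip a))
      = (TensorProduct.lid F D).toLinearMap ∘ₗ
        TensorProduct.map (Coalgebra.counit (R := F)) ((LinearMap.mulLeft F b) ∘ₗ (ha.act.flip a)) := by
    apply TensorProduct.ext'
    intro u v
    simp only [TensorProduct.lift.tmul, LinearMap.compl₂_apply, LinearMap.comp_apply,
      LinearMap.mul_apply', LinearMap.flip_apply, TensorProduct.map_tmul,
      LinearEquiv.coe_coe, TensorProduct.lid_tmul, LinearMap.mulLeft_apply]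
    rw [hb u, smul_mul_assoc]
  rw [key]
  have e3 : (LinearMap.rTensor H (Coalgebra.counit (R := F))) (Coalgebra.comul (R := F) h)
      = (1 : F) ⊗ₜ[F] h := by
    have := LinearMap.congr_fun (Coalgebra.rTensor_counit_comp_comul (R := F) (A := H)) h
    simpa using this
  rw [LinearMap.comp_apply, ← LinearMap.lTensor_comp_rTensor, LinearMap.comp_apply, e3]
  simp

lemma act_inv_right {b : D} (hb : b ∈ ha.invariants) (h : H) (a : D) :
    ha.act h (a * b) = ha.act h a * b := by
  rw [ha.act_mul]
  have key : TensorProduct.lift (((LinearMap.mul F D).comp (ha.act.flip a)).compl₂ (ha.act.flip b))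
      = (TensorProduct.rid F D).toLinearMap ∘ₗ
        TensorProduct.map ((LinearMap.mulRight F b) ∘ₗ (ha.act.flip a)) (Coalgebra.counit (R := F)) := by
    apply TensorProduct.ext'
    intro u v
    simp only [TensorProduct.lift.tmul, LinearMap.compl₂_apply, LinearMap.comp_apply,
      LinearMap.mul_apply', LinearMap.flip_apply, TensorProduct.map_tmul,
      LinearEquiv.coe_coe, TensorProduct.rid_tmul, LinearMap.mulRight_apply]
    rw [hb v, mul_smul_comm]
  rw [key]
  have e3 : (LinearMap.lTensor H (Coalgebra.counit (R := F))) (Coalgebra.comul (R := F) h)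
      = h ⊗ₜ[F] (1 : F) := by
    have := LinearMap.congr_fun (Coalgebra.lTensor_counit_comp_comul (R := F) (A := H)) h
    simpa using this
  rw [LinearMap.comp_apply, ← LinearMap.rTensor_comp_lTensor, LinearMap.comp_apply, e3]
  simp

lemma invariants_one : (1 : D) ∈ ha.invariants := by
  intro h
  rw [ha.act_one, Algebra.algebraMap_eq_smul_one]

lemma invariants_mul {b b' : D} (hb : b ∈ ha.invariants) (hb' : b' ∈ ha.invariants) :
    b * b' ∈ ha.invariants := by
  intro h
  rw [ha.act_inv_left hb, hb' h, mul_smul_comm]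

lemma invariants_inv {b : D} (hb : b ∈ ha.invariants) : b⁻¹ ∈ ha.invariants := by
  rcases eq_or_ne b 0 with rfl | hb0
  · intro h; simp
  · intro h
    have h1 : ha.act h (b * b⁻¹) = b * ha.act h b⁻¹ := ha.act_inv_left hb h b⁻¹
    rw [mul_inv_cancel₀ hb0, ha.invariants_one h] at h1
    have h2 : ha.act h b⁻¹ = b⁻¹ * (Coalgebra.counit (R := F) h • (1 : D)) := by
      rw [h1, inv_mul_cancel_left₀ hb0]
    rw [h2, mul_smul_comm, mul_one]

lemma act_center_comm {z b : D} (hz : z ∈ Subalgebra.center F D) (hb : b ∈ ha.invariants)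
    (h : H) : ha.act h z * b = b * ha.act h z := by
  have h1 : ha.act h (z * b) = ha.act h z * b := ha.act_inv_right hb h z
  have h2 : ha.act h (b * z) = b * ha.act h z := ha.act_inv_left hb h z
  rw [← h1, ← h2, (Subalgebra.mem_center_iff.mp hz b)]

end ModAlgAction

end AuxLemmas
section AuxLemmas2

variable {F : Type} [Field F] {H : Type} [Ring H] [HopfAlgebra F H]
  {D : Type} [DivisionRing D] [Algebra F D] (ha : HopfAction F H D)

namespace ModAlgAction

lemma key_identity {N : ℕ} (c x : Fin N → D)
    (hc : ∀ h : H, ∑ i, c i * ha.act h (x i) = 0) (g h : H) :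
    ∑ i, ha.act g (c i) * ha.act h (x i) = 0 := by
  classical
  set S : H →ₗ[F] H := HopfAlgebra.antipode (R := F) with hS
  let T : H ⊗[F] H →ₗ[F] D :=
    ∑ i, TensorProduct.lift (((LinearMap.mul F D).comp (ha.act.flip (c i))).compl₂
      (ha.act.flip (x i)))
  have hT : ∀ u v : H, T (u ⊗ₜ[F] v) = ∑ i, ha.act u (c i) * ha.act v (x i) := by
    intro u v
    simp [T, TensorProduct.lift.tmul, LinearMap.sum_apply]
  have star : ∀ g' h' : H,
      T ((LinearMap.lTensor H (LinearMap.mulRight F h')) (Coalgebra.comul (R := F) g')) = 0 := by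
    intro g' h'
    have e : T ∘ₗ (LinearMap.lTensor H (LinearMap.mulRight F h'))
        = ∑ i, TensorProduct.lift (((LinearMap.mul F D).comp (ha.act.flip (c i))).compl₂
            (ha.act.flip (ha.act h' (x i)))) := by
      apply TensorProduct.ext'
      intro u v
      simp only [LinearMap.comp_apply, LinearMap.lTensor_tmul, LinearMap.mulRight_apply, hT,
        LinearMap.sum_apply, TensorProduct.lift.tmul, LinearMap.compl₂_apply,
        LinearMap.mul_apply', LinearMap.flip_apply]
      exact Finset.sum_congr rfl fun i _ => by rw [ha.mul_act]
    have e2 : T ((LinearMap.lTensor H (LinearMap.mulRight F h')) (Coalgebra.comul (R := F) g'))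
        = ∑ i, ha.act g' (c i * ha.act h' (x i)) := by
      rw [← LinearMap.comp_apply, e]
      rw [LinearMap.sum_apply]
      exact Finset.sum_congr rfl fun i _ => (ha.act_mul g' (c i) (ha.act h' (x i))).symm
    rw [e2, ← map_sum, hc h', map_zero]
  obtain ⟨s, hs⟩ := TensorProduct.exists_finset (Coalgebra.comul (R := F) g)
  let ρ : H ⊗[F] (H ⊗[F] H) →ₗ[F] D :=
    T ∘ₗ (LinearMap.lTensor H
      ((LinearMap.mulRight F h) ∘ₗ (LinearMap.mul' F H) ∘ₗ (LinearMap.lTensor H S)))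
  have hρ : ∀ (a : H) (u : H ⊗[F] H),
      ρ (a ⊗ₜ[F] u) = T (a ⊗ₜ[F] ((LinearMap.mul' F H) ((LinearMap.lTensor H S) u) * h)) := by
    intro a u
    simp [ρ, LinearMap.lTensor_tmul]
  have axb : ∀ b : H, (LinearMap.mul' F H) ((LinearMap.lTensor H S) (Coalgebra.comul (R := F) b))
      = Coalgebra.counit (R := F) b • (1 : H) := by
    intro b
    have h0 := LinearMap.congr_fun (HopfAlgebra.mul_antipode_lTensor_comul (R := F) (A := H)) b
    simp only [LinearMap.comp_apply, Algebra.linearMap_apply,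
      Algebra.algebraMap_eq_smul_one] at h0
    rw [hS]
    exact h0
  have hg : (∑ p ∈ s, Coalgebra.counit (R := F) p.2 • p.1) = g := by
    have e4 := LinearMap.congr_fun (Coalgebra.lTensor_counit_comp_comul (R := F) (A := H)) g
    simp only [LinearMap.comp_apply, TensorProduct.mk_apply, LinearMap.flip_apply] at e4
    rw [hs] at e4
    have e5 := congrArg (TensorProduct.rid F H) e4
    simpa [map_sum, LinearMap.lTensor_tmul, TensorProduct.rid_tmul] using e5
  have hA : ρ ((LinearMap.lTensor H (Coalgebra.comul (R := F))) (Coalgebra.comul (R := F) g))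
      = T (g ⊗ₜ[F] h) := by
    rw [hs, map_sum, map_sum]
    have e6 : ∀ p : H × H,
        ρ ((LinearMap.lTensor H (Coalgebra.comul (R := F))) (p.1 ⊗ₜ[F] p.2))
        = Coalgebra.counit (R := F) p.2 • T (p.1 ⊗ₜ[F] h) := by
      intro p
      rw [LinearMap.lTensor_tmul, hρ, axb p.2, smul_mul_assoc, one_mul,
        TensorProduct.tmul_smul, map_smul]
    rw [Finset.sum_congr rfl fun p _ => e6 p]
    rw [← hg, TensorProduct.sum_tmul]
    rw [map_sum]
    exact Finset.sum_congr rfl fun p _ => by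
      rw [← TensorProduct.smul_tmul', map_smul]
  have hco := LinearMap.congr_fun (Coalgebra.coassoc (R := F) (A := H)) g
  simp only [LinearMap.comp_apply, LinearEquiv.coe_coe] at hco
  have hB : ρ ((TensorProduct.assoc F H H H)
      ((LinearMap.rTensor H (Coalgebra.comul (R := F))) (Coalgebra.comul (R := F) g))) = 0 := by
    rw [hs, map_sum, map_sum, map_sum]
    apply Finset.sum_eq_zero
    intro p _
    rw [LinearMap.rTensor_tmul]
    have claim : ∀ u : H ⊗[F] H, ρ ((TensorProduct.assoc F H H H) (u ⊗ₜ[F] p.2))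
        = T ((LinearMap.lTensor H (LinearMap.mulRight F (S p.2 * h))) u) := by
      intro u
      induction u using TensorProduct.induction_on with
      | zero => simp
      | tmul a b =>
        rw [TensorProduct.assoc_tmul, hρ, LinearMap.lTensor_tmul, LinearMap.lTensor_tmul,
          LinearMap.mul'_apply, LinearMap.mulRight_apply, mul_assoc]
      | add u v hu hv =>
        rw [TensorProduct.add_tmul, map_add, map_add, hu, hv, map_add, map_add]
    rw [claim, star p.1 (S p.2 * h)]
  have final : T (g ⊗ₜ[F] h) = 0 := by
    rw [← hA, ← hco, hB]
  rw [hT] at final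
  exact final

lemma exists_relation [FiniteDimensional F H]
    (x : Fin (Module.finrank F H + 1) → D) :
    ∃ c : Fin (Module.finrank F H + 1) → D, c ≠ 0 ∧
      ∀ h : H, ∑ i, c i * ha.act h (x i) = 0 := by
  classical
  let f : Fin (Module.finrank F H + 1) → (H →ₗ[F] D) := fun i => ha.act.flip (x i)
  let Φ : (Fin (Module.finrank F H + 1) → D) →ₗ[D] (H →ₗ[F] D) :=
    ∑ i, (LinearMap.toSpanSingleton D (H →ₗ[F] D) (f i)) ∘ₗ (LinearMap.proj i)
  let e := (Module.finBasis F H).constr (M' := D) D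
  haveI : FiniteDimensional D (H →ₗ[F] D) := LinearEquiv.finiteDimensional e
  have hrank : Module.finrank D (H →ₗ[F] D) = Module.finrank F H := by
    rw [← e.finrank_eq, Module.finrank_fin_fun]
  have hΦ : ¬ Function.Injective Φ := by
    intro hinj
    have hle := LinearMap.finrank_le_finrank_of_injective hinj
    rw [hrank, Module.finrank_fin_fun] at hle
    omega
  have hker : LinearMap.ker Φ ≠ ⊥ := fun hb => hΦ (LinearMap.ker_eq_bot.mp hb)
  obtain ⟨c, hcker, hc0⟩ := (Submodule.ne_bot_iff _).mp hker
  refine ⟨c, hc0, fun h => ?_⟩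
  have hzero : Φ c = 0 := hcker
  have hz2 := LinearMap.congr_fun hzero h
  simpa [Φ, f, LinearMap.sum_apply, LinearMap.toSpanSingleton_apply, smul_eq_mul]
    using hz2

lemma exists_invariant_relation [FiniteDimensional F H]
    (x : Fin (Module.finrank F H + 1) → D) :
    ∃ c : Fin (Module.finrank F H + 1) → D,
      (∀ i, c i ∈ ha.invariants) ∧ c ≠ 0 ∧ ∑ i, c i * x i = 0 := by
  classical
  let K : (Fin (Module.finrank F H + 1) → D) → Prop :=
    fun c => ∀ h : H, ∑ i, c i * ha.act h (x i) = 0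
  obtain ⟨c₀, hc₀0, hc₀⟩ := ha.exists_relation x
  let P : ℕ → Prop := fun k => ∃ c, K c ∧ c ≠ 0 ∧ (Finset.univ.filter fun i => c i ≠ 0).card = k
  have hP : ∃ k, P k := ⟨_, c₀, hc₀, hc₀0, rfl⟩
  obtain ⟨c, hcK, hc0, hccard⟩ := Nat.find_spec hP
  have hjex : ∃ j, c j ≠ 0 := by
    by_contra hcon; push_neg at hcon; exact hc0 (funext fun i => hcon i)
  obtain ⟨j, hj⟩ := hjex
  set c' : Fin (Module.finrank F H + 1) → D := fun i => (c j)⁻¹ * c i with hc'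
  have hc'K : K c' := by
    intro h
    simp only [hc', mul_assoc, ← Finset.mul_sum]
    rw [hcK h, mul_zero]
  have hsupp : ∀ i, c' i = 0 ↔ c i = 0 := by
    intro i
    constructor
    · intro h0
      rcases mul_eq_zero.mp h0 with h1 | h1
      · exact absurd h1 (inv_ne_zero hj)
      · exact h1
    · intro h0; simp [hc', h0]
  have hc'card : (Finset.univ.filter fun i => c' i ≠ 0).card = Nat.find hP := by
    rw [← hccard]
    congr 1
    apply Finset.filter_congr
    intro i _
    exact not_congr (hsupp i)
  have hc'j : c' j = 1 := inv_mul_cancel₀ hj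
  have hinv : ∀ (gg : H) (i : Fin (Module.finrank F H + 1)),
      ha.act gg (c' i) = Coalgebra.counit (R := F) gg • c' i := by
    intro gg
    by_contra hne
    push_neg at hne
    obtain ⟨i₀, hi₀⟩ := hne
    set ec : Fin (Module.finrank F H + 1) → D :=
      fun i => ha.act gg (c' i) - Coalgebra.counit (R := F) gg • c' i with hec
    have heK : K ec := by
      intro h
      have h1 : ∑ i, ha.act gg (c' i) * ha.act h (x i) = 0 :=
        ha.key_identity c' x hc'K gg h
      have h2 : ∑ i, (Coalgebra.counit (R := F) gg • c' i) * ha.act h (x i) = 0 := by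
        simp only [smul_mul_assoc, ← Finset.smul_sum]
        rw [hc'K h, smul_zero]
      simp only [hec, sub_mul, Finset.sum_sub_distrib, h1, h2, sub_zero]
    have hecj : ec j = 0 := by
      rw [hec]
      simp only [hc'j]
      rw [ha.invariants_one gg, sub_self]
    have hesupp : (Finset.univ.filter fun i => ec i ≠ 0)
        ⊆ (Finset.univ.filter fun i => c' i ≠ 0).erase j := by
      intro i hi
      simp only [Finset.mem_filter, Finset.mem_univ, true_and] at hi
      rw [Finset.mem_erase, Finset.mem_filter]
      refine ⟨?_, Finset.mem_univ i, ?_⟩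
      · rintro rfl; exact hi hecj
      · intro h0
        apply hi
        rw [hec]
        simp [h0]
    have hene : ec ≠ 0 := by
      intro h0
      apply hi₀
      have := congrFun h0 i₀
      simpa [hec, sub_eq_zero] using this
    have hPP : P ((Finset.univ.filter fun i => ec i ≠ 0).card) := ⟨ec, heK, hene, rfl⟩
    have hjmem : j ∈ (Finset.univ.filter fun i => c' i ≠ 0) := by
      simp [hc'j]
    have hlt : (Finset.univ.filter fun i => ec i ≠ 0).card < Nat.find hP := by
      calc (Finset.univ.filter fun i => ec i ≠ 0).card
          ≤ ((Finset.univ.filter fun i => c' i ≠ 0).erase j).card := Finset.card_le_card hesupp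
        _ < (Finset.univ.filter fun i => c' i ≠ 0).card := Finset.card_erase_lt_of_mem hjmem
        _ = Nat.find hP := hc'card
    exact Nat.find_min hP hlt hPP
  refine ⟨c', fun i => fun gg => hinv gg i, ?_, ?_⟩
  · intro h0
    have := congrFun h0 j
    rw [hc'j] at this
    exact one_ne_zero this
  · have h1 := hc'K 1
    simpa [ha.one_act] using h1

end ModAlgAction

end AuxLemmas2
section CenterField

variable (F : Type) [Field F] (D : Type) [DivisionRing D] [Algebra F D]

theorem center_isField : IsField (Subalgebra.center F D) where
  exists_pair_ne := ⟨0, 1, by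
    intro h
    have := congrArg (Subtype.val) h
    simp at this⟩
  mul_comm := fun a b => Subtype.ext (Subalgebra.mem_center_iff.mp a.2 (b : D)).symm
  mul_inv_cancel := by
    intro a ha
    have h0 : (a : D) ≠ 0 := fun h => ha (Subtype.ext h)
    refine ⟨⟨(a : D)⁻¹, ?_⟩, Subtype.ext (by simpa using mul_inv_cancel₀ h0)⟩
    rw [Subalgebra.mem_center_iff]
    intro b
    have hb : b * (a : D) = (a : D) * b := Subalgebra.mem_center_iff.mp a.2 b
    have key : (a : D) * (b * (a : D)⁻¹) = (a : D) * ((a : D)⁻¹ * b) := by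
      rw [← mul_assoc, ← hb, mul_assoc, mul_inv_cancel₀ h0, mul_one, ← mul_assoc,
        mul_inv_cancel₀ h0, one_mul]
    exact mul_left_cancel₀ h0 key

noncomputable instance : Field (Subalgebra.center F D) := (center_isField F D).toField

instance : Algebra (Subalgebra.center F D) D :=
  Algebra.ofModule
    (fun r xx yy => by
      rw [Subalgebra.smul_def, Subalgebra.smul_def, smul_eq_mul, smul_eq_mul, mul_assoc])
    (fun r xx yy => by
      rw [Subalgebra.smul_def, Subalgebra.smul_def, smul_eq_mul, smul_eq_mul,
        ← mul_assoc, Subalgebra.mem_center_iff.mp r.2 xx, mul_assoc])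

end CenterField
set_option maxHeartbeats 1000000 in
set_option synthInstance.maxHeartbeats 200000 in
/-- Let `H` be a Hopf algebra of dimension `d` over an algebraically closed field `F` (of
arbitrary characteristic) and let `D` be a division algebra over `F` of degree `m` which is
an `H`-module algebra.  If `gcd(d!, m) = 1` then the center `Z` of `D` is `H`-stable and
`D = Z Dᴴ`. -/
theorem center_stable_and_center_times_invariants
    (F : Type) [Field F] [IsAlgClosed F]
    (H : Type) [Ring H] [HopfAlgebra F H] [FiniteDimensional F H]
    (D : Type) [DivisionRing D] [Algebra F D]
    (d m : ℕ) (hd : Module.finrank F H = d)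
    (hm : Module.finrank (Subalgebra.center F D) D = m ^ 2)
    (hcop : Nat.Coprime d.factorial m)
    (ha : HopfAction F H D) :
    (∀ h : H, ∀ z ∈ Subalgebra.center F D, ha.act h z ∈ Subalgebra.center F D) ∧
    Subring.closure ((Subalgebra.center F D : Set D) ∪ ha.invariants) = ⊤ := by
  classical
  have hH1 : (1 : H) ≠ 0 := by
    intro h10
    have h2 : (1 : F) = 0 := by
      have h3 := map_one (Bialgebra.counitAlgHom F H)
      rw [h10, map_zero] at h3
      exact h3.symm
    exact one_ne_zero h2
  haveI : Nontrivial H := nontrivial_of_ne 1 0 hH1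
  have hd1 : 0 < d := hd ▸ Module.finrank_pos
  by_cases hm0 : m = 0
  · -- degenerate case: `m = 0` forces `d = 1` and the action is by the counit
    subst hm0
    have hdfac : d.factorial = 1 := by simpa [Nat.Coprime] using hcop
    have hdeq : d = 1 := le_antisymm (Nat.factorial_eq_one.mp hdfac) hd1
    have hact : ∀ (h : H) (a : D), ha.act h a = Coalgebra.counit (R := F) h • a := by
      have h1 : Submodule.span F {(1 : H)} = ⊤ := by
        apply Submodule.eq_top_of_finrank_eq
        rw [finrank_span_singleton hH1, hd, hdeq]
      intro h a
      have h2 : h ∈ Submodule.span F {(1 : H)} := h1 ▸ Submodule.mem_top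
      obtain ⟨cc, hcc⟩ := Submodule.mem_span_singleton.mp h2
      rw [← hcc, map_smul, LinearMap.smul_apply, ha.one_act, map_smul]
      rw [Bialgebra.counit_one, smul_eq_mul, mul_one]
    constructor
    · intro h z hz
      rw [hact]
      exact Subalgebra.smul_mem _ hz _
    · rw [eq_top_iff]
      intro x _
      exact Subring.subset_closure (Or.inr (fun h => hact h x))
  · -- main case
    have hm1 : 0 < m := Nat.pos_of_ne_zero hm0
    haveI hfdZD : FiniteDimensional (Subalgebra.center F D) D :=
      FiniteDimensional.of_finrank_pos (by rw [hm]; positivity)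
    set E := Algebra.adjoin (Subalgebra.center F D) (ha.invariants) with hE
    haveI hfdZE : FiniteDimensional (Subalgebra.center F D) E :=
      FiniteDimensional.of_injective (Subalgebra.val E).toLinearMap Subtype.val_injective
    haveI : Nontrivial E := ⟨0, 1, by
      intro hcon
      have h4 := congrArg Subtype.val hcon
      simp at h4⟩
    have hleft : ∀ u : E, u ≠ 0 → ∃ w : E, w * u = 1 := by
      intro u hu
      have hu0 : (u : D) ≠ 0 := fun hcc => hu (Subtype.ext hcc)
      let r : E →ₗ[Subalgebra.center F D] E :=
        { toFun := fun y => y * u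
          map_add' := fun y₁ y₂ => add_mul y₁ y₂ u
          map_smul' := fun z y => by
            simp only [RingHom.id_apply]
            exact smul_mul_assoc z y u }
      have hrinj : Function.Injective r := by
        intro y₁ y₂ hy
        have h5 : (y₁ : D) * u = (y₂ : D) * u := by
          have h6 := congrArg Subtype.val hy
          simpa [r] using h6
        exact Subtype.ext (mul_right_cancel₀ hu0 h5)
      obtain ⟨w, hw⟩ := (LinearMap.injective_iff_surjective (f := r)).mp hrinj 1
      exact ⟨w, hw⟩
    have hunit : ∀ u : E, IsUnit u ∨ u = 0 := by
      intro u
      rcases eq_or_ne u 0 with h0 | h0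
      · exact Or.inr h0
      · obtain ⟨w, hw⟩ := hleft u h0
        have hw0 : w ≠ 0 := by
          rintro rfl
          rw [zero_mul] at hw
          exact one_ne_zero hw.symm
        obtain ⟨v, hv⟩ := hleft w hw0
        have hvu : v = u := by
          calc v = v * (w * u) := by rw [hw, mul_one]
          _ = (v * w) * u := by rw [mul_assoc]
          _ = u := by rw [hv, one_mul]
        refine Or.inl ⟨⟨u, w, ?_, hw⟩, rfl⟩
        rw [← hvu]
        exact hvu ▸ hv
    letI : DivisionRing E := DivisionRing.ofIsUnitOrEqZero hunit
    haveI : Module.Finite E D :=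
      Module.Finite.of_restrictScalars_finite (Subalgebra.center F D) E D
    have hn1 : 0 < Module.finrank E D := Module.finrank_pos
    have hnd : Module.finrank E D ≤ d := by
      by_contra hgt
      push_neg at hgt
      have hcast : Module.finrank F H + 1 ≤ Module.finrank E D := by omega
      let bE := Module.finBasis E D
      let xx : Fin (Module.finrank F H + 1) → D := fun i => bE (Fin.castLE hcast i)
      obtain ⟨c, hcinv, hc0, hcsum⟩ := ha.exists_invariant_relation xx
      have hli := (bE.linearIndependent.comp (fun i => Fin.castLE hcast i)
        (Fin.castLE_injective hcast))
      rw [Fintype.linearIndependent_iff] at hli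
      have hz : ∀ i, (⟨c i, Algebra.subset_adjoin (hcinv i)⟩ : E) = 0 := by
        apply hli
        rw [← hcsum]
        apply Finset.sum_congr rfl
        intro i _
        rw [Subalgebra.smul_def, smul_eq_mul]
        rfl
      apply hc0
      funext i
      have h5 := congrArg Subtype.val (hz i)
      simpa using h5
    have hmul : Module.finrank (Subalgebra.center F D) E * Module.finrank E D = m ^ 2 := by
      rw [Module.finrank_mul_finrank (Subalgebra.center F D) E D, hm]
    have hdvd : Module.finrank E D ∣ m ^ 2 := Dvd.intro_left _ hmul
    have hneq1 : Module.finrank E D = 1 := by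
      by_contra hne
      have hp := Nat.minFac_prime hne
      have hpn : (Module.finrank E D).minFac ∣ Module.finrank E D := Nat.minFac_dvd _
      have hpm : (Module.finrank E D).minFac ∣ m := hp.dvd_of_dvd_pow (hpn.trans hdvd)
      have hpd : (Module.finrank E D).minFac ∣ d.factorial :=
        Nat.dvd_factorial hp.pos ((Nat.minFac_le hn1).trans hnd)
      have h1 : (Module.finrank E D).minFac ∣ 1 := by
        rw [← hcop.gcd_eq_one]
        exact Nat.dvd_gcd hpd hpm
      exact hp.one_lt.ne' (Nat.dvd_one.mp h1)
    have hEtop : ∀ xx : D, xx ∈ E := by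
      intro xx
      have hsp : Submodule.span E {(1 : D)} = ⊤ := by
        apply Submodule.eq_top_of_finrank_eq
        rw [finrank_span_singleton (one_ne_zero (α := D)), hneq1]
      have hmem : xx ∈ Submodule.span E {(1 : D)} := hsp ▸ Submodule.mem_top
      obtain ⟨a, haa⟩ := Submodule.mem_span_singleton.mp hmem
      rw [← haa, Subalgebra.smul_def, smul_eq_mul, mul_one]
      exact a.2
    have hclosure : Subring.closure ((Subalgebra.center F D : Set D) ∪ ha.invariants) = ⊤ := by
      rw [eq_top_iff]
      rintro xx -
      have hx : xx ∈ E := hEtop xx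
      rw [hE] at hx
      induction hx using Algebra.adjoin_induction with
      | mem y hy => exact Subring.subset_closure (Or.inr hy)
      | algebraMap r =>
          have h7 : algebraMap (Subalgebra.center F D) D r = (r : D) := by
            rw [Algebra.algebraMap_eq_smul_one, Subalgebra.smul_def, smul_eq_mul, mul_one]
          rw [h7]
          exact Subring.subset_closure (Or.inl r.2)
      | add y₁ y₂ hy₁ hy₂ ih₁ ih₂ => exact Subring.add_mem _ ih₁ ih₂
      | mul y₁ y₂ hy₁ hy₂ ih₁ ih₂ => exact Subring.mul_mem _ ih₁ ih₂
    refine ⟨?_, hclosure⟩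
    intro h z hz
    rw [Subalgebra.mem_center_iff]
    intro xx
    have hxc : xx ∈ Subring.closure ((Subalgebra.center F D : Set D) ∪ ha.invariants) := by
      rw [hclosure]; trivial
    induction hxc using Subring.closure_induction with
    | mem y hy =>
        rcases hy with hy | hy
        · exact (Subalgebra.mem_center_iff.mp hy _).symm
        · exact (ha.act_center_comm hz hy h).symm
    | zero => rw [zero_mul, mul_zero]
    | one => rw [one_mul, mul_one]
    | add y₁ y₂ h₁ h₂ ih₁ ih₂ => rw [add_mul, mul_add, ih₁, ih₂]
    | neg y h₁ ih => rw [neg_mul, mul_neg, ih]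
    | mul y₁ y₂ h₁ h₂ ih₁ ih₂ => rw [mul_assoc, ih₂, ← mul_assoc, ih₁, mul_assoc]
end

section
/- Let H be a finite dimensional Hopf algebra over k acting on the Weyl algebra A = A_n(k). Then there exists a finitely generated subring R of k and a Hopf R-order H_R of H such that the action restricts to an action of H_R on A_R = A_n(R), i.e., H_R · A_R ⊆ A_R. -/
open TensorProduct

/-- The defining relations of the `n`-th Weyl algebra: generators `xᵢ = .inl i`,
`yᵢ = .inr i`, relations `[xᵢ,xⱼ] = [yᵢ,yⱼ] = 0` and `[yᵢ,xⱼ] = δᵢⱼ`. -/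
inductive WeylRel (R : Type) [CommRing R] (n : ℕ) :
    FreeAlgebra R (Fin n ⊕ Fin n) → FreeAlgebra R (Fin n ⊕ Fin n) → Prop
  | xx (i j : Fin n) : WeylRel R n (FreeAlgebra.ι R (Sum.inl i) * FreeAlgebra.ι R (Sum.inl j))
      (FreeAlgebra.ι R (Sum.inl j) * FreeAlgebra.ι R (Sum.inl i))
  | yy (i j : Fin n) : WeylRel R n (FreeAlgebra.ι R (Sum.inr i) * FreeAlgebra.ι R (Sum.inr j))
      (FreeAlgebra.ι R (Sum.inr j) * FreeAlgebra.ι R (Sum.inr i))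
  | yx (i j : Fin n) : WeylRel R n (FreeAlgebra.ι R (Sum.inr i) * FreeAlgebra.ι R (Sum.inl j))
      (FreeAlgebra.ι R (Sum.inl j) * FreeAlgebra.ι R (Sum.inr i) + if i = j then 1 else 0)

/-- The `n`-th Weyl algebra `A_n(R)` over a commutative ring `R`. -/
def WeylAlgebra (R : Type) [CommRing R] (n : ℕ) : Type := RingQuot (WeylRel R n)

noncomputable instance (R : Type) [CommRing R] (n : ℕ) : Ring (WeylAlgebra R n) :=
  inferInstanceAs (Ring (RingQuot (WeylRel R n)))

noncomputable instance (S R : Type) [CommSemiring S] [CommRing R] [Algebra S R] (n : ℕ) :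
    Algebra S (WeylAlgebra R n) :=
  inferInstanceAs (Algebra S (RingQuot (WeylRel R n)))

namespace WeylAlgebra

/-- The generator `xᵢ` of the Weyl algebra. -/
noncomputable def X {R : Type} [CommRing R] {n : ℕ} (i : Fin n) : WeylAlgebra R n :=
  RingQuot.mkRingHom (WeylRel R n) (FreeAlgebra.ι R (Sum.inl i))

/-- The generator `yᵢ` of the Weyl algebra. -/
noncomputable def Y {R : Type} [CommRing R] {n : ℕ} (i : Fin n) : WeylAlgebra R n :=
  RingQuot.mkRingHom (WeylRel R n) (FreeAlgebra.ι R (Sum.inr i))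

end WeylAlgebra

/-!
Choose a `k`-basis `b` of `H`. Only finitely many scalars are involved in the structure
constants of `H` in this basis (for the unit, product, coproduct, counit and antipode) and in
expressing the finitely many elements `bᵢ ⬝ xⱼ`, `bᵢ ⬝ yⱼ` as noncommutative polynomials in the
generators of `A_n(k)`. Let `R` be the subring they generate and `H_R` the `R`-span of `b`.
Then `H_R` is free with basis `b`, hence a Hopf `R`-order, and by the Leibniz rule
`h ⬝ (ab) = ∑ (h₁ ⬝ a)(h₂ ⬝ b)` the set of elements of `A_R` sent into `A_R` by all of `H_R`
is a subring containing `R` and the generators, i.e. all of `A_R`.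
-/

open Filter

section SubringSpan

variable {k : Type*} [CommRing k] (R : Subring k) {V W : Type*}
  [AddCommGroup V] [Module k V] [AddCommGroup W] [Module k W]

theorem LinearMap.apply_mem_of_mem_span (f : V →ₗ[k] W) {s : Set V} {N : Submodule R W}
    (h : ∀ v ∈ s, f v ∈ N) {x : V} (hx : x ∈ Submodule.span R s) : f x ∈ N :=
  (Submodule.span_le (p := N.comap (f.restrictScalars R))).mpr h hx

theorem LinearMap.apply_mem_subring_of_mem_span (f : V →ₗ[k] k) {s : Set V}
    (h : ∀ v ∈ s, f v ∈ R) {x : V} (hx : x ∈ Submodule.span R s) : f x ∈ R := by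
  obtain ⟨r, hr⟩ := Submodule.mem_one.mp <| f.apply_mem_of_mem_span R (N := 1)
    (fun v hv => Submodule.mem_one.mpr ⟨⟨f v, h v hv⟩, rfl⟩) hx
  exact hr ▸ r.2

variable {R} {ι κ : Type*}

theorem Module.Basis.mem_span_of_repr_mem [Fintype ι] (b : Module.Basis ι k V) {v : V}
    (h : ∀ i, b.repr v i ∈ R) : v ∈ Submodule.span R (Set.range b) := by
  rw [← b.sum_repr v]
  exact Submodule.sum_mem _ fun i _ =>
    Submodule.smul_mem _ (⟨_, h i⟩ : R) (Submodule.subset_span ⟨i, rfl⟩)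

theorem Module.Basis.apply_mem_span_of_repr_mem [Fintype κ] (b : Module.Basis ι k V)
    (c : Module.Basis κ k W) (f : V →ₗ[k] W) (h : ∀ i j, c.repr (f (b i)) j ∈ R) {x : V}
    (hx : x ∈ Submodule.span R (Set.range b)) : f x ∈ Submodule.span R (Set.range c) :=
  f.apply_mem_of_mem_span R (by rintro _ ⟨i, rfl⟩; exact c.mem_span_of_repr_mem (h i)) hx

theorem Module.Basis.apply_mem_span_tmul_of_repr_mem [Fintype ι] (b : Module.Basis ι k V)
    (f : V →ₗ[k] V ⊗[k] V) (h : ∀ i p, (b.tensorProduct b).repr (f (b i)) p ∈ R) {x : V}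
    (hx : x ∈ Submodule.span R (Set.range b)) :
    f x ∈ Submodule.span R {z : V ⊗[k] V | ∃ a ∈ Submodule.span R (Set.range b),
      ∃ c ∈ Submodule.span R (Set.range b), z = a ⊗ₜ[k] c} := by
  refine Submodule.span_mono ?_ (b.apply_mem_span_of_repr_mem _ f h hx)
  rintro _ ⟨p, rfl⟩
  exact ⟨_, Submodule.subset_span ⟨p.1, rfl⟩, _, Submodule.subset_span ⟨p.2, rfl⟩,
    b.tensorProduct_apply' b p⟩

theorem Module.Basis.mul_mem_span_of_repr_mem {H : Type*} [Ring H] [Algebra k H] [Fintype ι]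
    (b : Module.Basis ι k H) (h : ∀ i j l, b.repr (b i * b j) l ∈ R) {x y : H}
    (hx : x ∈ Submodule.span R (Set.range b)) (hy : y ∈ Submodule.span R (Set.range b)) :
    x * y ∈ Submodule.span R (Set.range b) := by
  refine Submodule.mul_le.mp ?_ x hx y hy
  rw [Submodule.span_mul_span, Submodule.span_le]
  rintro _ ⟨_, ⟨i, rfl⟩, _, ⟨j, rfl⟩, rfl⟩
  exact b.mem_span_of_repr_mem (h i j)

noncomputable def Module.Basis.restrictScalarsSpan (R : Subring k) (b : Module.Basis ι k V) :
    Module.Basis ι R (Submodule.span R (Set.range b)) :=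
  .span (b.linearIndependent.restrict_scalars' R)

theorem Module.Basis.bijective_liftBaseChange_span (b : Module.Basis ι k V) :
    Function.Bijective (LinearMap.liftBaseChange k (Submodule.span R (Set.range b)).subtype) := by
  have : LinearMap.liftBaseChange k (Submodule.span R (Set.range b)).subtype =
      ((Algebra.TensorProduct.basis k (b.restrictScalarsSpan R)).equiv b (.refl ι)).toLinearMap :=
    (Algebra.TensorProduct.basis k (b.restrictScalarsSpan R)).ext fun i => by
      rw [LinearEquiv.coe_coe, Module.Basis.equiv_apply, Algebra.TensorProduct.basis_apply,
        LinearMap.liftBaseChange_tmul, one_smul]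
      simp [Module.Basis.restrictScalarsSpan, Module.Basis.span_apply]
  exact this ▸ LinearEquiv.bijective _

end SubringSpan

section FinitelyGeneratedScalars

variable {k : Type*} [CommRing k] {A : Type*} [Ring A] [Algebra k A]

theorem Algebra.adjoin_eq_ring_closure_image (R : Subring k) (S : Set A) :
    (Algebra.adjoin R S).toSubring = Subring.closure (algebraMap k A '' R ∪ S) := by
  rw [Algebra.adjoin_eq_ring_closure, IsScalarTower.algebraMap_eq R k A, RingHom.coe_comp,
    Set.range_comp, show Set.range (algebraMap R k) = R from Subtype.range_coe]

theorem eventually_mem_subringClosure (c : k) :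
    ∀ᶠ s : Finset k in atTop, c ∈ Subring.closure (s : Set k) :=
  (eventually_ge_atTop {c}).mono fun _ hs =>
    Subring.subset_closure (hs (Finset.mem_singleton_self c))

theorem eventually_mem_adjoin_subringClosure {S : Set A} {a : A} (ha : a ∈ Algebra.adjoin k S) :
    ∀ᶠ s : Finset k in atTop, a ∈ Algebra.adjoin (Subring.closure (s : Set k)) S := by
  induction ha using Algebra.adjoin_induction with
  | mem a ha => exact .of_forall fun _ => Algebra.subset_adjoin ha
  | algebraMap r =>
    exact (eventually_mem_subringClosure r).mono fun s hr =>
      Subalgebra.algebraMap_mem _ (⟨r, hr⟩ : Subring.closure (s : Set k))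
  | add a b _ _ iha ihb => exact (iha.and ihb).mono fun _ h => add_mem h.1 h.2
  | mul a b _ _ iha ihb => exact (iha.and ihb).mono fun _ h => mul_mem h.1 h.2

end FinitelyGeneratedScalars

theorem ModAlgAction.act_mem_adjoin {k : Type} [CommRing k] {H : Type} [Ring H] [Module k H]
    {comul : H →ₗ[k] H ⊗[k] H} {counit : H →ₗ[k] k} {A : Type} [Ring A] [Algebra k A]
    (ha : ModAlgAction k H comul counit A) {R : Subring k} {T : Set H} {S : Set A}
    (hcomul : ∀ x ∈ Submodule.span R T, comul x ∈ Submodule.span R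
      {z : H ⊗[k] H | ∃ a ∈ Submodule.span R T, ∃ b ∈ Submodule.span R T, z = a ⊗ₜ[k] b})
    (hcounit : ∀ x ∈ Submodule.span R T, counit x ∈ R)
    (hgen : ∀ x ∈ T, ∀ s ∈ S, ha.act x s ∈ Algebra.adjoin R S)
    {x : H} (hx : x ∈ Submodule.span R T) {a : A} (haS : a ∈ Algebra.adjoin R S) :
    ha.act x a ∈ Algebra.adjoin R S := by
  induction haS using Algebra.adjoin_induction generalizing x with
  | mem s hs =>
    exact LinearMap.apply_mem_of_mem_span R (ha.act.flip s)
      (N := Subalgebra.toSubmodule (Algebra.adjoin R S)) (fun v hv => hgen v hv s hs) hx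
  | algebraMap r =>
    have : ha.act x (algebraMap R A r) = algebraMap R A (r * ⟨counit x, hcounit x hx⟩) := by
      rw [Algebra.algebraMap_eq_smul_one, Subring.smul_def, map_smul, ha.act_one,
        Algebra.smul_def, ← map_mul]
      rfl
    exact this ▸ Subalgebra.algebraMap_mem _ _
  | add a b _ _ iha ihb => exact map_add (ha.act x) a b ▸ add_mem (iha hx) (ihb hx)
  | mul a b _ _ iha ihb =>
    rw [ha.act_mul]
    refine LinearMap.apply_mem_of_mem_span R _ (N := Subalgebra.toSubmodule (Algebra.adjoin R S))
      ?_ (hcomul x hx)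
    rintro _ ⟨a', ha', b', hb', rfl⟩
    exact Subalgebra.mul_mem _ (iha ha') (ihb hb')

theorem WeylAlgebra.adjoin_range_X_union_range_Y (R : Type) [CommRing R] (n : ℕ) :
    Algebra.adjoin R (Set.range (WeylAlgebra.X (R := R) (n := n)) ∪ Set.range WeylAlgebra.Y) =
      ⊤ := by
  rw [eq_top_iff]
  rintro a -
  obtain ⟨w, rfl⟩ := RingQuot.mkAlgHom_surjective R (WeylRel R n) a
  have hw : w ∈ Algebra.adjoin R (Set.range (FreeAlgebra.ι R (X := Fin n ⊕ Fin n))) := by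
    rw [FreeAlgebra.adjoin_range_ι]; trivial
  induction hw using Algebra.adjoin_induction with
  | mem x hx =>
    obtain ⟨v, rfl⟩ := hx
    apply Algebra.subset_adjoin
    rcases v with i | i
    · exact .inl ⟨i, by rw [WeylAlgebra.X, ← RingQuot.mkAlgHom_coe R (WeylRel R n)]; rfl⟩
    · exact .inr ⟨i, by rw [WeylAlgebra.Y, ← RingQuot.mkAlgHom_coe R (WeylRel R n)]; rfl⟩
  | algebraMap r => rw [AlgHom.commutes]; exact Subalgebra.algebraMap_mem _ r
  | add x y _ _ ihx ihy => rw [map_add]; exact add_mem ihx ihy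
  | mul x y _ _ ihx ihy => rw [map_mul]; exact mul_mem ihx ihy


theorem exists_hopf_order_with_restricted_action_general
    (k : Type) [Field k]
    (H : Type) [Ring H] [HopfAlgebra k H] [FiniteDimensional k H]
    (n : ℕ) (ha : HopfAction k H (WeylAlgebra k n)) :
    ∃ R : Subring k, (∃ s : Finset k, Subring.closure (s : Set k) = R) ∧
      ∃ HR : Submodule R H,
        Module.Finite R HR ∧
        Module.Projective R HR ∧
        Function.Bijective (LinearMap.liftBaseChange k HR.subtype) ∧
        (1 : H) ∈ HR ∧
        (∀ x ∈ HR, ∀ y ∈ HR, x * y ∈ HR) ∧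
        (∀ x ∈ HR, Coalgebra.comul (R := k) x ∈
          Submodule.span R {z : H ⊗[k] H | ∃ a ∈ HR, ∃ b ∈ HR, z = a ⊗ₜ[k] b}) ∧
        (∀ x ∈ HR, Coalgebra.counit (R := k) x ∈ R) ∧
        (∀ x ∈ HR, HopfAlgebra.antipode (R := k) x ∈ HR) ∧
        (∀ x ∈ HR, ∀ a ∈ Subring.closure
            ((algebraMap k (WeylAlgebra k n) '' R) ∪
              Set.range (WeylAlgebra.X (R := k) (n := n)) ∪
              Set.range (WeylAlgebra.Y (R := k) (n := n))),
          ha.act x a ∈ Subring.closure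
            ((algebraMap k (WeylAlgebra k n) '' R) ∪
              Set.range (WeylAlgebra.X (R := k) (n := n)) ∪
              Set.range (WeylAlgebra.Y (R := k) (n := n)))) := by
  let b := Module.finBasis k H
  let S := Set.range (WeylAlgebra.X (R := k) (n := n)) ∪ Set.range WeylAlgebra.Y
  have hS (a : WeylAlgebra k n) : a ∈ Algebra.adjoin k S := by
    rw [WeylAlgebra.adjoin_range_X_union_range_Y]; trivial
  obtain ⟨s, hmul, hone, hcomul, hcounit, hanti, hX, hY⟩ : ∃ s : Finset k,
      let R := Subring.closure (s : Set k)
      (∀ i j l, b.repr (b i * b j) l ∈ R) ∧ (∀ l, b.repr 1 l ∈ R) ∧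
      (∀ i p, (b.tensorProduct b).repr (Coalgebra.comul (R := k) (b i)) p ∈ R) ∧
      (∀ i, Coalgebra.counit (R := k) (b i) ∈ R) ∧
      (∀ i l, b.repr (HopfAlgebra.antipode (R := k) (b i)) l ∈ R) ∧
      (∀ i j, ha.act (b i) (WeylAlgebra.X j) ∈ Algebra.adjoin R S) ∧
      (∀ i j, ha.act (b i) (WeylAlgebra.Y j) ∈ Algebra.adjoin R S) := by
    -- each requirement holds for all large enough finite sets of scalars
    refine Filter.Eventually.exists (f := atTop) ?_
    simp only [eventually_and, eventually_all]
    exact ⟨fun _ _ _ => eventually_mem_subringClosure _, fun _ => eventually_mem_subringClosure _,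
      fun _ _ => eventually_mem_subringClosure _, fun _ => eventually_mem_subringClosure _,
      fun _ _ => eventually_mem_subringClosure _,
      fun _ _ => eventually_mem_adjoin_subringClosure (hS _),
      fun _ _ => eventually_mem_adjoin_subringClosure (hS _)⟩
  set R := Subring.closure (s : Set k)
  have hcomulR (x) (hx : x ∈ Submodule.span R (Set.range b)) :=
    b.apply_mem_span_tmul_of_repr_mem _ hcomul hx
  have hcounitR (x) (hx : x ∈ Submodule.span R (Set.range b)) :=
    LinearMap.apply_mem_subring_of_mem_span R (Coalgebra.counit (R := k))
      (by rintro _ ⟨i, rfl⟩; exact hcounit i) hx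
  refine ⟨R, ⟨s, rfl⟩, Submodule.span R (Set.range b), .of_basis (b.restrictScalarsSpan R),
    .of_basis (b.restrictScalarsSpan R), b.bijective_liftBaseChange_span,
    b.mem_span_of_repr_mem hone, fun x hx y hy => b.mul_mem_span_of_repr_mem hmul hx hy,
    hcomulR, hcounitR, fun x hx => b.apply_mem_span_of_repr_mem b _ hanti hx, ?_⟩
  rw [Set.union_assoc, ← Algebra.adjoin_eq_ring_closure_image]
  refine fun x hx a haS => ha.act_mem_adjoin hcomulR hcounitR ?_ hx haS
  rintro _ ⟨i, rfl⟩ _ (⟨j, rfl⟩ | ⟨j, rfl⟩)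
  exacts [hX i j, hY i j]

/-- Let `H` be a finite dimensional Hopf algebra over `k` acting on the Weyl algebra
`A = A_n(k)`.  Then there is a finitely generated subring `R ⊆ k` and a Hopf `R`-order
`H_R` of `H` (a finitely generated projective `R`-submodule with `H_R ⊗[R] k ≅ H`,
containing `1`, closed under multiplication, comultiplication, counit and antipode)
such that the action restricts to an action of `H_R` on `A_R = A_n(R)`. -/
theorem exists_hopf_order_with_restricted_action
    (k : Type) [Field k] [IsAlgClosed k] [CharZero k]
    (H : Type) [Ring H] [HopfAlgebra k H] [FiniteDimensional k H]
    (n : ℕ) (ha : HopfAction k H (WeylAlgebra k n)) :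
    ∃ R : Subring k, (∃ s : Finset k, Subring.closure (s : Set k) = R) ∧
      ∃ HR : Submodule R H,
        Module.Finite R HR ∧
        Module.Projective R HR ∧
        Function.Bijective (LinearMap.liftBaseChange k HR.subtype) ∧
        (1 : H) ∈ HR ∧
        (∀ x ∈ HR, ∀ y ∈ HR, x * y ∈ HR) ∧
        (∀ x ∈ HR, Coalgebra.comul (R := k) x ∈
          Submodule.span R {z : H ⊗[k] H | ∃ a ∈ HR, ∃ b ∈ HR, z = a ⊗ₜ[k] b}) ∧
        (∀ x ∈ HR, Coalgebra.counit (R := k) x ∈ R) ∧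
        (∀ x ∈ HR, HopfAlgebra.antipode (R := k) x ∈ HR) ∧
        (∀ x ∈ HR, ∀ a ∈ Subring.closure
            ((algebraMap k (WeylAlgebra k n) '' R) ∪
              Set.range (WeylAlgebra.X (R := k) (n := n)) ∪
              Set.range (WeylAlgebra.Y (R := k) (n := n))),
          ha.act x a ∈ Subring.closure
            ((algebraMap k (WeylAlgebra k n) '' R) ∪
              Set.range (WeylAlgebra.X (R := k) (n := n)) ∪
              Set.range (WeylAlgebra.Y (R := k) (n := n)))) :=
  exists_hopf_order_with_restricted_action_general k H n ha
end

section
/- Let R be a finitely generated subring of k. Then for all sufficiently large prime numbers p there exists a ring homomorphism ψ: R → F̄_p, the algebraic closure of the field with p elements. -/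
/-!
A homomorphism from `R = ℤ[x₁, …, xₙ]/I` to a ring `L` is the same as a solution in `L` of a
generating set of `I`, and by the Hilbert basis theorem such a set can be chosen finite. Solvability
of a finite system of integer polynomial equations is a first-order sentence in the language of
rings. It holds in `k`, hence in every algebraically closed field of characteristic zero
(completeness of `ACF₀`), hence in every algebraically closed field of characteristic `p` for all
but finitely many `p` (compactness), in particular in the algebraic closure of `𝔽_p`.
-/

open FirstOrder Language Ring

theorem FreeCommRing.range_lift {α R : Type*} [CommRing R] (f : α → R) :
    (lift f).range = Subring.closure (Set.range f) := by
  refine le_antisymm ?_ (Subring.closure_le.2 ?_)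
  · rintro _ ⟨x, rfl⟩
    induction x using FreeCommRing.induction_on with
    | neg_one => simp
    | of a => simpa using Subring.subset_closure (Set.mem_range_self a)
    | add x y hx hy => simpa using add_mem hx hy
    | mul x y hx hy => simpa using mul_mem hx hy
  · rintro _ ⟨a, rfl⟩
    exact ⟨of a, lift_of f a⟩

instance FreeCommRing.isNoetherianRing {α : Type*} [Finite α] :
    IsNoetherianRing (FreeCommRing α) :=
  isNoetherianRing_of_ringEquiv _ (freeCommRingEquivMvPolynomialInt α).symm

namespace FirstOrder.Ring

variable {σ : Type*} [Finite σ]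

noncomputable def solvableSentence (t : Finset (FreeCommRing σ)) : Language.ring.Sentence :=
  Formula.iExs σ <| BoundedFormula.iInf fun g : t =>
    ((termOfFreeCommRing (g : FreeCommRing σ)).relabel Sum.inr).equal
      ((termOfFreeCommRing 0).relabel Sum.inr)

theorem realize_solvableSentence (t : Finset (FreeCommRing σ)) (M : Type*) [CommRing M]
    [CompatibleRing M] :
    M ⊨ solvableSentence t ↔ ∃ x : σ → M, ∀ g ∈ t, FreeCommRing.lift x g = 0 := by
  simp only [Sentence.Realize, Formula.Realize, solvableSentence, Term.equal,
    BoundedFormula.realize_iExs, BoundedFormula.realize_iInf, BoundedFormula.realize_bdEqual,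
    Term.realize_relabel, realize_termOfFreeCommRing, map_zero, Subtype.forall,
    Sum.elim_comp_inl, Sum.elim_comp_inr]

end FirstOrder.Ring

namespace FirstOrder.Field

theorem exists_forall_prime_le_realize_of_realize_charZero (φ : Language.ring.Sentence)
    (K : Type*) [Field K] [CompatibleRing K] [IsAlgClosed K] [CharZero K] (hK : K ⊨ φ) :
    ∃ N : ℕ, ∀ p : ℕ, p.Prime → N ≤ p → ∀ (L : Type*) [Field L] [CompatibleRing L]
      [IsAlgClosed L] [CharP L p], L ⊨ φ := by
  have : CharP K 0 := CharP.ofCharZero K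
  have hACF₀ : Theory.ACF 0 ⊨ᵇ φ :=
    ((ACF_isComplete (Or.inr rfl)).realize_sentence_iff φ K).1 hK
  obtain ⟨N, hN⟩ := ((finite_ACF_prime_not_realize_of_ACF_zero_realize φ hACF₀).image
    ((↑) : Nat.Primes → ℕ)).bddAbove
  refine ⟨N + 1, fun p hp hNp L _ _ _ _ => ?_⟩
  have hACFp : Theory.ACF p ⊨ᵇ φ := by
    by_contra h
    have : p ≤ N := hN ⟨⟨p, hp⟩, h, rfl⟩
    omega
  exact hACFp.realize_sentence L

end FirstOrder.Field

theorem RingHom.nonempty_range_ringHom_of_ker_le {A B C : Type*} [Ring A] [Ring B] [Ring C]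
    (f : A →+* B) (g : A →+* C) (h : RingHom.ker f ≤ RingHom.ker g) :
    Nonempty (f.range →+* C) :=
  ⟨f.rangeRestrict.liftOfSurjective f.rangeRestrict_surjective
    ⟨g, by rwa [ker_rangeRestrict]⟩⟩

/-- Let `R` be a finitely generated subring of an algebraically closed field `k` of
characteristic zero.  Then for all sufficiently large primes `p` there exists a ring
homomorphism `ψ : R → F̄_p`. -/
theorem exists_hom_to_algebraic_closure_zmod_for_large_primes
    (k : Type) [Field k] [IsAlgClosed k] [CharZero k]
    (R : Subring k) (hfg : ∃ s : Finset k, Subring.closure (s : Set k) = R) :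
    ∃ N : ℕ, ∀ p : ℕ, ∀ hp : p.Prime, N ≤ p →
      haveI : Fact p.Prime := ⟨hp⟩
      Nonempty (R →+* AlgebraicClosure (ZMod p)) := by
  obtain ⟨s, rfl⟩ := hfg
  set f := FreeCommRing.lift ((↑) : s → k)
  obtain ⟨t, ht⟩ := IsNoetherian.noetherian (RingHom.ker f)
  let := compatibleRingOfRing k
  have hk : k ⊨ Ring.solvableSentence t :=
    (Ring.realize_solvableSentence t k).2
      ⟨(↑), fun g hg => show g ∈ RingHom.ker f from ht ▸ Submodule.subset_span hg⟩
  obtain ⟨N, hN⟩ := Field.exists_forall_prime_le_realize_of_realize_charZero _ k hk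
  refine ⟨N, fun p hp hNp => ?_⟩
  have : Fact p.Prime := ⟨hp⟩
  let := compatibleRingOfRing (AlgebraicClosure (ZMod p))
  obtain ⟨x, hx⟩ :=
    (Ring.realize_solvableSentence t _).1 (hN p hp hNp (AlgebraicClosure (ZMod p)))
  have hker : RingHom.ker f ≤ RingHom.ker (FreeCommRing.lift x) := by
    rw [← ht, Ideal.span_le]
    exact hx
  have hrange : f.range = Subring.closure (s : Set k) := by
    rw [FreeCommRing.range_lift, Subtype.range_coe_subtype, Finset.setOfPred_mem]
  exact hrange ▸ f.nonempty_range_ringHom_of_ker_le _ hker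
end

section
/- Let R be a finitely generated subring of k. For any prime number ℓ, the ring homomorphism Ψ_ℓ: R → ∏_{p ≥ ℓ} ∏_{ψ: R → F̄_p} F̄_p, given by the product over all primes p ≥ ℓ and all ring homomorphisms ψ: R → F̄_p of the maps ψ, is injective. -/
/-!
A finitely generated ℤ-algebra is a Jacobson ring and its residue fields at maximal ideals are
finite (Zariski's lemma over ℤ). So if `x ≠ y` in `R`, some maximal ideal `m` avoids
`(x - y) * ℓ!`; the residue field `R ⧸ m` is a finite field of some characteristic `p`, and
`p > ℓ` because `ℓ!` survives in it. Embedding `R ⧸ m` into `F̄_p` separates `x` from `y`.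
-/

universe u

instance Int.isJacobsonRing : IsJacobsonRing ℤ := by
  refine isJacobsonRing_iff_prime_eq.mpr fun P hP => ?_
  by_cases hP0 : P = ⊥
  · subst hP0
    refine le_antisymm (fun x hx => ?_) Ideal.le_jacobson
    have hplus := Int.isUnit_iff.mp (Ideal.mem_jacobson_bot.mp hx 1)
    have hminus := Int.isUnit_iff.mp (Ideal.mem_jacobson_bot.mp hx (-1))
    rw [Ideal.mem_bot]
    omega
  · have := hP.isMaximal hP0
    exact Ideal.jacobson_eq_self_of_isMaximal

theorem Subring.finiteType_int_of_closure_finset {A : Type*} [Ring A] {R : Subring A}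
    (hR : ∃ s : Finset A, Subring.closure (s : Set A) = R) : Algebra.FiniteType ℤ R := by
  obtain ⟨s, rfl⟩ := hR
  have : Algebra.FiniteType ℤ (Algebra.adjoin ℤ (s : Set A)) :=
    (Subalgebra.fg_iff_finiteType _).mp (Subalgebra.fg_adjoin_finset s)
  exact .equiv this (Subring.closureEquivAdjoinInt _).symm

theorem Field.finite_of_finiteType_int (K : Type*) [Field K] [inst : Algebra ℤ K]
    [Algebra.FiniteType ℤ K] : Finite K := by
  obtain rfl : inst = Ring.toIntAlgebra K := Subsingleton.elim _ _
  have : Module.Finite ℤ K := finite_of_finite_type_of_isJacobsonRing ℤ K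
  obtain ⟨p, hchar⟩ := CharP.exists K
  rcases CharP.char_is_prime_or_zero K p with hp | rfl
  · have : Fact p.Prime := ⟨hp⟩
    let := ZMod.algebra K p
    have : Module.Finite (ZMod p) K := .of_restrictScalars_finite ℤ _ _
    exact Module.finite_of_finite (ZMod p)
  · have : CharZero K := CharP.charP_to_charZero K
    have : Algebra.IsIntegral ℤ K := Algebra.IsIntegral.of_finite ℤ K
    exact (Int.not_isField
      (isField_of_isIntegral_of_isField (algebraMap ℤ K).injective_int
        (Field.toIsField K))).elim

theorem exists_ringHom_finite_field_apply_ne_zero {R : Type u} [CommRing R] [IsReduced R]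
    [Algebra.FiniteType ℤ R] {r : R} (hr : r ≠ 0) :
    ∃ (K : Type u) (_ : Field K) (_ : Finite K) (π : R →+* K), π r ≠ 0 := by
  have : IsJacobsonRing R := isJacobsonRing_of_finiteType (A := ℤ)
  have hbot : (⊥ : Ideal R).jacobson = ⊥ :=
    IsJacobsonRing.out this (Ideal.isRadical_bot_iff.mpr ‹_›)
  have : r ∉ (⊥ : Ideal R).jacobson := by rwa [hbot, Ideal.mem_bot]
  obtain ⟨m, ⟨-, hm⟩, hrm⟩ : ∃ m : Ideal R, (⊥ ≤ m ∧ m.IsMaximal) ∧ r ∉ m := by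
    simpa [Ideal.jacobson, Submodule.mem_sInf] using this
  let := Ideal.Quotient.field m
  have : Algebra.FiniteType ℤ (R ⧸ m) :=
    .of_surjective (Ideal.Quotient.mkₐ ℤ m) (Ideal.Quotient.mkₐ_surjective ℤ m)
  exact ⟨R ⧸ m, _, Field.finite_of_finiteType_int _, Ideal.Quotient.mk m,
    by rwa [ne_eq, Ideal.Quotient.eq_zero_iff_mem]⟩

theorem CharP.lt_of_cast_factorial_ne_zero {K : Type*} [Semiring K] {p : ℕ} [CharP K p]
    (hp : p.Prime) {n : ℕ} (h : (n.factorial : K) ≠ 0) : n < p := by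
  by_contra! hpn
  exact h ((CharP.cast_eq_zero_iff K p _).mpr ((hp.dvd_factorial).mpr hpn))

theorem nonempty_ringHom_algebraicClosure_zmod (K : Type*) [Field K] [Finite K] (p : ℕ)
    [Fact p.Prime] [CharP K p] : Nonempty (K →+* AlgebraicClosure (ZMod p)) := by
  let := ZMod.algebra K p
  have : Module.Finite (ZMod p) K := Module.Finite.of_finite
  have : Algebra.IsAlgebraic (ZMod p) K := .of_finite _ _
  exact ⟨(IsAlgClosed.lift : K →ₐ[ZMod p] AlgebraicClosure (ZMod p)).toRingHom⟩

theorem product_of_reductions_mod_p_injective_general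
    (k : Type) [Field k] [CharZero k]
    (R : Subring k) (hfg : ∃ s : Finset k, Subring.closure (s : Set k) = R)
    (ℓ : ℕ) :
    ∀ x y : R,
      (∀ (p : ℕ) (hp : p.Prime), ℓ ≤ p →
        haveI : Fact p.Prime := ⟨hp⟩
        ∀ ψ : R →+* AlgebraicClosure (ZMod p), ψ x = ψ y) →
      x = y := by
  intro x y h
  by_contra hxy
  have := Subring.finiteType_int_of_closure_finset hfg
  obtain ⟨K, _, _, π, hπ⟩ := exists_ringHom_finite_field_apply_ne_zero
    (mul_ne_zero (sub_ne_zero.mpr hxy) (Nat.cast_ne_zero.mpr ℓ.factorial_ne_zero))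
  obtain ⟨p, _⟩ := CharP.exists K
  have hp := CharP.char_is_prime K p
  have : Fact p.Prime := ⟨hp⟩
  rw [map_mul, map_sub, map_natCast, mul_ne_zero_iff, sub_ne_zero] at hπ
  obtain ⟨φ⟩ := nonempty_ringHom_algebraicClosure_zmod K p
  exact hπ.1 (φ.injective (by
    simpa using h p hp (CharP.lt_of_cast_factorial_ne_zero hp hπ.2).le (φ.comp π)))

/-- Let `R` be a finitely generated subring of an algebraically closed field `k` of
characteristic zero.  For any prime `ℓ`, the homomorphism
`Ψ_ℓ : R → ∏_{p ≥ ℓ} ∏_{ψ : R → F̄_p} F̄_p` given by the product of all the `ψ`'s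
is injective. -/
theorem product_of_reductions_mod_p_injective
    (k : Type) [Field k] [IsAlgClosed k] [CharZero k]
    (R : Subring k) (hfg : ∃ s : Finset k, Subring.closure (s : Set k) = R)
    (ℓ : ℕ) (hℓ : ℓ.Prime) :
    ∀ x y : R,
      (∀ (p : ℕ) (hp : p.Prime), ℓ ≤ p →
        haveI : Fact p.Prime := ⟨hp⟩
        ∀ ψ : R →+* AlgebraicClosure (ZMod p), ψ x = ψ y) →
      x = y :=
  product_of_reductions_mod_p_injective_general k R hfg ℓ
end

section
/- Let H be a Hopf algebra of dimension d over an algebraically closed field F and let D be a division algebra over F of degree m which is an H-module algebra with gcd(d!, m) = 1. Then the centralizer of D^H in D equals the center Z of D. -/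
open TensorProduct

/-! Let `Z` be the center of `D` and `B` the `Z`-subalgebra generated by `Dᴴ`. The operators
`x ↦ ∑ (hᵢ ⬝ x) cᵢ` (`hᵢ ∈ H`, `cᵢ ∈ D`) form a right `D`-space of dimension at most `d`, and a
density argument shows that they realise every assignment of values on a `Dᴴ`-linearly
independent family; hence `[D : B] ≤ [D : Dᴴ] ≤ d`. As `B` is a division algebra between `Z` and
`D`, `[D : B]` divides `m²`, and being at most `d` it divides `d!`, so `B = D`. Anything commuting
with `Dᴴ` then commutes with all of `D`. If `m = 0`, then `d! = 1` forces `H = F`, which acts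
trivially. -/

open Coalgebra MulOpposite

namespace HopfAction

section Ring

variable {k H A : Type} [CommRing k] [Ring H] [Bialgebra k H] [Ring A] [Algebra k A]
  (ha : HopfAction k H A)

theorem act_mul_eq_sum {ι : Type} {h : H} (r : Coalgebra.Repr k h ι) (a b : A) :
    ha.act h (a * b) = ∑ i ∈ r.index, ha.act (r.left i) a * ha.act (r.right i) b := by
  rw [ha.act_mul, ← r.eq, map_sum]
  simp only [TensorProduct.lift.tmul, LinearMap.compl₂_apply, LinearMap.comp_apply,
    LinearMap.flip_apply, LinearMap.mul_apply']

theorem act_mul_of_mem_invariants {s : A} (hs : s ∈ ha.invariants) (h : H) (x : A) :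
    ha.act h (s * x) = s * ha.act h x := by
  rw [ha.act_mul_eq_sum (ℛ k h)]
  conv_rhs => rw [← Coalgebra.sum_counit_smul (ℛ k h)]
  simp only [hs _, map_sum, map_smul, LinearMap.sum_apply, LinearMap.smul_apply,
    Finset.mul_sum, smul_mul_assoc, mul_smul_comm]

def invariantSubring : Subring A where
  carrier := ha.invariants
  one_mem' h := by rw [ha.act_one, Algebra.algebraMap_eq_smul_one]
  mul_mem' {a b} haa hb h := by
    rw [ha.act_mul_of_mem_invariants haa, hb h, mul_smul_comm]
  zero_mem' h := by rw [map_zero, smul_zero]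
  add_mem' {a b} haa hb h := by rw [map_add, haa h, hb h, smul_add]
  neg_mem' {a} haa h := by rw [map_neg, haa h, smul_neg]

/-- The operators `x ↦ ∑ (hᵢ ⬝ x) cᵢ` on `A`; `Aᵐᵒᵖ` acts on `Module.End k A` by right
multiplication of values. -/
def opSpan : Submodule Aᵐᵒᵖ (Module.End k A) :=
  Submodule.span Aᵐᵒᵖ (Set.range ha.act)

theorem act_mem_opSpan (h : H) : ha.act h ∈ ha.opSpan :=
  Submodule.subset_span ⟨h, rfl⟩

theorem act_comp_op_smul (g : H) (c : A) (f : Module.End k A) :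
    ha.act g ∘ₗ (op c • f) =
      ∑ i ∈ (ℛ k g).index, op (ha.act ((ℛ k g).right i) c) • (ha.act ((ℛ k g).left i) ∘ₗ f) := by
  ext x
  simp only [LinearMap.comp_apply, LinearMap.smul_apply, op_smul_eq_mul, LinearMap.sum_apply,
    ha.act_mul_eq_sum (ℛ k g)]

theorem act_comp_mem_opSpan {f : Module.End k A} (hf : f ∈ ha.opSpan) (g : H) :
    ha.act g ∘ₗ f ∈ ha.opSpan := by
  induction hf using Submodule.span_induction generalizing g with
  | mem f hf =>
    obtain ⟨h, rfl⟩ := hf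
    have : ha.act g ∘ₗ ha.act h = ha.act (g * h) := by ext x; exact (ha.mul_act g h x).symm
    exact this ▸ ha.act_mem_opSpan _
  | zero => simp
  | add f f' _ _ hf hf' => rw [LinearMap.comp_add]; exact add_mem (hf g) (hf' g)
  | smul c f _ hf =>
    rw [← op_unop c, act_comp_op_smul]
    exact Submodule.sum_mem _ fun i _ => Submodule.smul_mem _ _ (hf _)

theorem comp_mem_opSpan {e f : Module.End k A} (he : e ∈ ha.opSpan) (hf : f ∈ ha.opSpan) :
    e ∘ₗ f ∈ ha.opSpan := by
  induction he using Submodule.span_induction with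
  | mem e he => obtain ⟨g, rfl⟩ := he; exact ha.act_comp_mem_opSpan hf g
  | zero => simp
  | add e e' _ _ he he' => rw [LinearMap.add_comp]; exact add_mem he he'
  | smul c e _ he => rw [LinearMap.smul_comp]; exact Submodule.smul_mem _ _ he

theorem apply_mul_of_mem_opSpan {e : Module.End k A} (he : e ∈ ha.opSpan) {s : A}
    (hs : s ∈ ha.invariants) (x : A) : e (s * x) = s * e x := by
  induction he using Submodule.span_induction with
  | mem e he => obtain ⟨h, rfl⟩ := he; exact ha.act_mul_of_mem_invariants hs h x
  | zero => simp
  | add e e' _ _ he he' => simp only [LinearMap.add_apply, he, he', mul_add]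
  | smul c e _ he => simp only [LinearMap.smul_apply, he, smul_eq_mul_unop, mul_assoc]

end Ring

theorem invariants_eq_univ_of_finrank_eq_one {F H A : Type} [Field F] [Ring H] [Bialgebra F H]
    [Ring A] [Algebra F A] (ha : HopfAction F H A) (hH : Module.finrank F H = 1) :
    ha.invariants = Set.univ := by
  have := Bialgebra.nontrivial F (A := H)
  refine Set.eq_univ_of_forall fun a h => ?_
  obtain ⟨c, rfl⟩ := (finrank_eq_one_iff_of_nonzero' (1 : H) one_ne_zero).mp hH h
  rw [map_smul, LinearMap.smul_apply, ha.one_act, map_smul, Bialgebra.counit_one, smul_eq_mul,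
    mul_one]

section DivisionRing

variable {k H D : Type} [CommRing k] [Ring H] [Bialgebra k H] [DivisionRing D] [Algebra k D]
  (ha : HopfAction k H D)

def vanishingOn (S : Set D) : Submodule Dᵐᵒᵖ (Module.End k D) where
  carrier := {e | e ∈ ha.opSpan ∧ ∀ s ∈ S, e s = 0}
  add_mem' := fun ⟨he, heS⟩ ⟨hf, hfS⟩ =>
    ⟨add_mem he hf, fun s hs => by rw [LinearMap.add_apply, heS s hs, hfS s hs, add_zero]⟩
  zero_mem' := ⟨zero_mem _, fun _ _ => rfl⟩
  smul_mem' c _ := fun ⟨he, heS⟩ =>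
    ⟨Submodule.smul_mem _ c he, fun s hs => by rw [LinearMap.smul_apply, heS s hs, smul_zero]⟩

theorem mem_vanishingOn {S : Set D} {e : Module.End k D} :
    e ∈ ha.vanishingOn S ↔ e ∈ ha.opSpan ∧ ∀ s ∈ S, e s = 0 :=
  Iff.rfl

theorem mem_vanishingOn_insert {S : Set D} {u : D} {e : Module.End k D} :
    e ∈ ha.vanishingOn (insert u S) ↔ e ∈ ha.vanishingOn S ∧ e u = 0 := by
  simp only [mem_vanishingOn, Set.forall_mem_insert]
  tauto

theorem act_comp_mem_vanishingOn {S : Set D} {e : Module.End k D} (he : e ∈ ha.vanishingOn S)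
    (h : H) : ha.act h ∘ₗ e ∈ ha.vanishingOn S :=
  ⟨ha.act_comp_mem_opSpan he.1 h, fun s hs => by rw [LinearMap.comp_apply, he.2 s hs, map_zero]⟩

theorem apply_eq_zero_of_mem_vanishingOn {S : Set D} {e : Module.End k D}
    (he : e ∈ ha.vanishingOn S) {w : D} (hw : w ∈ Submodule.span ha.invariantSubring S) :
    e w = 0 := by
  induction hw using Submodule.span_induction with
  | mem w hw => exact he.2 w hw
  | zero => exact map_zero e
  | add w w' _ _ hw hw' => rw [map_add, hw, hw', add_zero]
  | smul s w _ hw =>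
    rw [Subring.smul_def, smul_eq_mul, ha.apply_mul_of_mem_opSpan he.1 s.2, hw, mul_zero]

theorem mem_span_insert_of_vanishingOn {S : Set D} {u v : D}
    (hS : ∀ w ∉ Submodule.span ha.invariantSubring S, ∃ e ∈ ha.vanishingOn S, e w ≠ 0)
    (hu : u ∉ Submodule.span ha.invariantSubring S)
    (huv : ∀ e ∈ ha.vanishingOn S, e u = 0 → e v = 0) :
    v ∈ Submodule.span ha.invariantSubring (insert u S) := by
  obtain ⟨e₀, he₀, he₀u⟩ := hS u hu
  set e₁ := op (e₀ u)⁻¹ • e₀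
  have he₁ : e₁ ∈ ha.vanishingOn S := Submodule.smul_mem _ _ he₀
  have he₁u : e₁ u = 1 := by
    rw [LinearMap.smul_apply, op_smul_eq_mul, mul_inv_cancel₀ he₀u]
  set t := e₁ v
  -- `e ↦ e v` factors through `e ↦ e u`, and the factor is left multiplication by `t`
  have hfactor : ∀ e ∈ ha.vanishingOn S, e v = t * e u := by
    intro e he
    have := huv (e - op (e u) • e₁) (sub_mem he (Submodule.smul_mem _ _ he₁))
      (by rw [LinearMap.sub_apply, LinearMap.smul_apply, op_smul_eq_mul, he₁u, one_mul, sub_self])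
    rwa [LinearMap.sub_apply, LinearMap.smul_apply, op_smul_eq_mul, sub_eq_zero] at this
  have ht : t ∈ ha.invariants := by
    intro h
    have := hfactor _ (ha.act_comp_mem_vanishingOn he₁ h)
    rwa [LinearMap.comp_apply, LinearMap.comp_apply, he₁u, ha.act_one,
      Algebra.algebraMap_eq_smul_one, mul_smul_comm, mul_one] at this
  have hw : v - t * u ∈ Submodule.span ha.invariantSubring S := by
    by_contra hw
    obtain ⟨e, he, hne⟩ := hS _ hw
    exact hne (by rw [map_sub, ha.apply_mul_of_mem_opSpan he.1 ht, hfactor e he, sub_self])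
  exact Submodule.mem_span_insert.mpr ⟨⟨t, ht⟩, _, hw, (add_sub_cancel _ _).symm⟩

theorem exists_mem_vanishingOn_apply_ne_zero {S : Set D} (hS : S.Finite) {v : D}
    (hv : v ∉ Submodule.span ha.invariantSubring S) :
    ∃ e ∈ ha.vanishingOn S, e v ≠ 0 := by
  induction S, hS using Set.Finite.induction_on generalizing v with
  | empty =>
    refine ⟨ha.act 1, ⟨ha.act_mem_opSpan 1, by simp⟩, ?_⟩
    rw [ha.one_act]
    rintro rfl
    exact hv (zero_mem _)
  | @insert u S _ _ ih =>
    by_cases hu : u ∈ Submodule.span ha.invariantSubring S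
    · rw [Submodule.span_insert_eq_span hu] at hv
      obtain ⟨e, he, hev⟩ := ih hv
      exact ⟨e, ha.mem_vanishingOn_insert.mpr ⟨he, ha.apply_eq_zero_of_mem_vanishingOn he hu⟩, hev⟩
    · by_contra! h
      exact hv (ha.mem_span_insert_of_vanishingOn (fun w hw => ih hw) hu
        fun e he heu => h e (ha.mem_vanishingOn_insert.mpr ⟨he, heu⟩))

theorem exists_mem_opSpan_apply_eq_single {ι : Type} [Fintype ι] [DecidableEq ι] {x : ι → D}
    (hx : LinearIndependent ha.invariantSubring x) (i : ι) :
    ∃ e ∈ ha.opSpan, ∀ j, e (x j) = Pi.single (M := fun _ => D) i 1 j := by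
  obtain ⟨e, he, hne⟩ := ha.exists_mem_vanishingOn_apply_ne_zero (Set.toFinite (x '' {i}ᶜ))
    (hx.notMem_span_image (Set.notMem_compl_iff.mpr rfl))
  refine ⟨op (e (x i))⁻¹ • e, Submodule.smul_mem _ _ he.1, fun j => ?_⟩
  rw [LinearMap.smul_apply, op_smul_eq_mul]
  rcases eq_or_ne j i with rfl | hji
  · rw [Pi.single_eq_same, mul_inv_cancel₀ hne]
  · rw [Pi.single_eq_of_ne hji, he.2 _ (Set.mem_image_of_mem x hji), zero_mul]

end DivisionRing

section Rank

variable {F H D : Type} [Field F] [Ring H] [Bialgebra F H] [FiniteDimensional F H]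
  [DivisionRing D] [Algebra F D] (ha : HopfAction F H D)

theorem rank_opSpan_le : Module.rank Dᵐᵒᵖ ha.opSpan ≤ Module.finrank F H := by
  let b := Module.finBasis F H
  have hle : ha.opSpan ≤ Submodule.span Dᵐᵒᵖ (Set.range (ha.act ∘ b)) := by
    refine Submodule.span_le.mpr ?_
    rintro _ ⟨h, rfl⟩
    rw [← b.sum_repr h, map_sum]
    refine Submodule.sum_mem _ fun i _ => ?_
    rw [map_smul]
    exact Submodule.smul_of_tower_mem _ _ (Submodule.subset_span ⟨i, rfl⟩)
  calc Module.rank Dᵐᵒᵖ ha.opSpan ≤ Cardinal.mk (Set.range (ha.act ∘ b)) :=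
        (Submodule.rank_mono hle).trans (rank_span_le _)
    _ ≤ Module.finrank F H := Cardinal.mk_range_le.trans_eq (by simp)

theorem card_le_finrank_of_linearIndependent {ι : Type} [Fintype ι] {x : ι → D}
    (hx : LinearIndependent ha.invariantSubring x) : Fintype.card ι ≤ Module.finrank F H := by
  classical
  choose δ hδ hδx using ha.exists_mem_opSpan_apply_eq_single hx
  let Φ : Module.End F D →ₗ[Dᵐᵒᵖ] ι → D := LinearMap.pi fun j => LinearMap.applyₗ' Dᵐᵒᵖ (x j)
  have hΦ : ha.opSpan.map Φ = ⊤ := by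
    refine eq_top_iff.mpr fun y _ => ⟨∑ i, op (y i) • δ i,
      Submodule.sum_mem _ fun i _ => Submodule.smul_mem _ _ (hδ i), funext fun j => ?_⟩
    simp [Φ, hδx, Pi.single_apply]
  have hrank : Module.rank Dᵐᵒᵖ (ι → D) ≤ Module.finrank F H :=
    calc Module.rank Dᵐᵒᵖ (ι → D) = Module.rank Dᵐᵒᵖ (ha.opSpan.map Φ) := by rw [hΦ, rank_top]
      _ ≤ Module.rank Dᵐᵒᵖ ha.opSpan := rank_map_le _ _
      _ ≤ Module.finrank F H := ha.rank_opSpan_le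
  rwa [(LinearEquiv.piCongrRight fun _ => MulOpposite.opLinearEquiv Dᵐᵒᵖ).rank_eq, rank_fun',
    Nat.cast_le] at hrank

theorem rank_invariantSubring_le : Module.rank ha.invariantSubring D ≤ Module.finrank F H :=
  rank_le fun s hs => by simpa using ha.card_le_finrank_of_linearIndependent hs

end Rank

end HopfAction

theorem Subalgebra.eq_top_of_rank_le_of_coprime {K D : Type} [Field K] [DivisionRing D]
    [Algebra K D] [FiniteDimensional K D] (B : Subalgebra K D) {n : ℕ}
    (hB : Module.rank B D ≤ n) (hcop : Nat.Coprime n.factorial (Module.finrank K D)) :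
    B = ⊤ := by
  let _ := divisionRingOfFiniteDimensional K B
  have _ := Module.Finite.of_restrictScalars_finite K B D
  have htower := Module.finrank_mul_finrank K B D
  -- `[D : B]` divides `[D : K]` and, being at most `n`, also divides `n!`
  have h1 : Module.finrank B D = 1 :=
    (hcop.coprime_dvd_left (Nat.dvd_factorial Module.finrank_pos
      (Module.finrank_le_of_rank_le hB))).eq_one_of_dvd (Dvd.intro_left _ htower)
  rw [← Algebra.toSubmodule_eq_top]
  apply Submodule.eq_top_of_finrank_eq
  rw [Subalgebra.finrank_toSubmodule, ← htower, h1, mul_one]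

theorem Subring.centralizer_eq_center_of_adjoin_eq_top {D : Type} [Ring D] {S : Set D}
    (hS : Algebra.adjoin (Subring.center D) S = ⊤) :
    Subring.centralizer S = Subring.center D := by
  refine le_antisymm (fun c hc => Subring.mem_center_iff.mpr fun g => ?_)
    (Subring.center_le_centralizer S)
  have hle : Algebra.adjoin (Subring.center D) S ≤ Subalgebra.centralizer _ {c} :=
    Algebra.adjoin_le fun s hs => Set.mem_centralizer_iff.mpr fun _ hc' =>
      hc' ▸ (Subring.mem_centralizer_iff.mp hc s hs).symm
  exact (hle (hS ▸ Algebra.mem_top) c rfl).symm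

theorem centralizer_of_invariants_eq_center_general
    (F : Type) [Field F]
    (H : Type) [Ring H] [HopfAlgebra F H] [FiniteDimensional F H]
    (D : Type) [DivisionRing D] [Algebra F D]
    (d m : ℕ) (hd : Module.finrank F H = d)
    (hm : Module.finrank (Subalgebra.center F D) D = m ^ 2)
    (hcop : Nat.Coprime d.factorial m)
    (ha : HopfAction F H D) :
    Subring.centralizer ha.invariants = Subring.center D := by
  rcases eq_or_ne m 0 with rfl | hm0
  · have _ := Bialgebra.nontrivial F (A := H)
    have hd1 : d = 1 := by
      have hpos : 0 < d := hd ▸ Module.finrank_pos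
      rw [Nat.coprime_zero_right, Nat.factorial_eq_one] at hcop
      omega
    rw [ha.invariants_eq_univ_of_finrank_eq_one (hd.trans hd1), Subring.centralizer_univ]
  · have hZ : Module.finrank (Subring.center D) D = m ^ 2 := hm
    have _ : FiniteDimensional (Subring.center D) D :=
      Module.finite_of_finrank_pos (hZ ▸ by positivity)
    have hrank : Module.rank (Algebra.adjoin (Subring.center D) ha.invariants) D
        ≤ Module.rank ha.invariantSubring D :=
      rank_le_of_injective_injectiveₛ (fun s => ⟨s, Algebra.subset_adjoin s.2⟩) (AddMonoidHom.id D)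
        (fun _ _ h => Subtype.ext (congrArg Subtype.val h :)) Function.injective_id fun _ _ => rfl
    refine Subring.centralizer_eq_center_of_adjoin_eq_top
      (Subalgebra.eq_top_of_rank_le_of_coprime _ (n := d) ?_ (hZ ▸ hcop.pow_right 2))
    exact hrank.trans (hd ▸ ha.rank_invariantSubring_le)

/-- Let `H` be a Hopf algebra of dimension `d` over an algebraically closed field `F` and
`D` an `H`-module division algebra of degree `m` with `gcd(d!, m) = 1`.  Then the
centralizer of `Dᴴ` in `D` equals the center `Z` of `D`. -/
theorem centralizer_of_invariants_eq_center
    (F : Type) [Field F] [IsAlgClosed F]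
    (H : Type) [Ring H] [HopfAlgebra F H] [FiniteDimensional F H]
    (D : Type) [DivisionRing D] [Algebra F D]
    (d m : ℕ) (hd : Module.finrank F H = d)
    (hm : Module.finrank (Subalgebra.center F D) D = m ^ 2)
    (hcop : Nat.Coprime d.factorial m)
    (ha : HopfAction F H D) :
    Subring.centralizer ha.invariants = Subring.center D :=
  centralizer_of_invariants_eq_center_general F H D d m hd hm hcop ha
end
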